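/- For any N-party holographic graph model G and any disjoint nonempty subsystems Y, Z ⊆ ⟦N⟧: I(Y:Z) = 0 if and only if mC_{Y∪Z} = mC_Y ∪ mC_Z, mC_Y ∩ mC_Z = ∅, and no edge of G has one endpoint in mC_Y and the other endpoint in mC_Z (equivalently, the subgraph G_{Y∪Z} is the disjoint union of the subgraphs G_Y and G_Z). -/

import Mathlib

namespace HEC

/-- The parties `⟦N⟧ = {0,1,…,N}`, where `0` is the purifier. -/
abbrev Party (N : ℕ) := Fin (N + 1)

/-- A collection of parties. -/
abbrev PSet (N : ℕ) := Finset (Party N)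

/-- An `N`-party holographic graph model: a finite weighted graph with no loops or
multiple edges (encoded by a symmetric nonnegative weight function whose support is
the edge set, so that every edge has strictly positive weight and the diagonal
vanishes), together with a labeling of the boundary vertices (those with
`label v = some ℓ`) by parties in `⟦N⟧` such that every party labels at least one
boundary vertex. -/
structure GraphModel (N : ℕ) where
  V : Type
  [fintypeV : Fintype V]
  [decEqV : DecidableEq V]
  w : V → V → ℝ
  w_symm : ∀ u v : V, w u v = w v u
  w_loopless : ∀ v : V, w v v = 0
  w_nonneg : ∀ u v : V, 0 ≤ w u v
  label : V → Option (Party N)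
  label_surj : ∀ ℓ : Party N, ∃ v : V, label v = some ℓ

attribute [instance] GraphModel.fintypeV GraphModel.decEqV

/-- `C` is a `Y`-cut: its intersection with the boundary vertices consists exactly of
the boundary vertices labeled by parties in `Y`. -/
def IsCut {N : ℕ} (G : GraphModel N) (Y : PSet N) (C : Finset G.V) : Prop :=
  ∀ v : G.V, ∀ ℓ : Party N, G.label v = some ℓ → (v ∈ C ↔ ℓ ∈ Y)

/-- The cost `‖C‖` of a cut: the total weight of the edges with exactly one endpoint
in `C`. -/
def cutCost {N : ℕ} (G : GraphModel N) (C : Finset G.V) : ℝ :=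
  ∑ u ∈ C, ∑ v ∈ Cᶜ, G.w u v

/-- `C` is a min-cut for `Y`: a `Y`-cut of minimal cost among all `Y`-cuts. -/
def IsMinCut {N : ℕ} (G : GraphModel N) (Y : PSet N) (C : Finset G.V) : Prop :=
  IsCut G Y C ∧ ∀ C' : Finset G.V, IsCut G Y C' → cutCost G C ≤ cutCost G C'

/-- `C` is a minimal min-cut for `Y`: a min-cut for `Y` which is minimal with respect
to set inclusion among all min-cuts for `Y`. -/
def IsMinimalMinCut {N : ℕ} (G : GraphModel N) (Y : PSet N) (C : Finset G.V) : Prop :=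
  IsMinCut G Y C ∧ ∀ C' : Finset G.V, IsMinCut G Y C' → C' ⊆ C → C' = C

/-- The min-cut entropy `S_Y`: the minimum of `‖C‖` over all `Y`-cuts. -/
noncomputable def gEntropy {N : ℕ} (G : GraphModel N) (Y : PSet N) : ℝ :=
  sInf (cutCost G '' {C : Finset G.V | IsCut G Y C})

/-- The mutual information `I(Y:Z) = S_Y + S_Z - S_{Y∪Z}` computed from min-cuts. -/
noncomputable def gMI {N : ℕ} (G : GraphModel N) (Y Z : PSet N) : ℝ :=
  gEntropy G Y + gEntropy G Z - gEntropy G (Y ∪ Z)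

/-- Reachability inside the subgraph of `G` induced by the vertex set `C`. -/
def Reaches {N : ℕ} (G : GraphModel N) (C : Finset G.V) : G.V → G.V → Prop :=
  Relation.ReflTransGen (fun a b => a ∈ C ∧ b ∈ C ∧ 0 < G.w a b)

/-- `D` is the vertex set of a connected component of the subgraph of `G` induced
by `C`. -/
def IsCompOf {N : ℕ} (G : GraphModel N) (C D : Finset G.V) : Prop :=
  ∃ v ∈ C, ∀ u : G.V, u ∈ D ↔ (u ∈ C ∧ Reaches G C v u)

/-- The graph model is simple: the labeling is a bijection between the boundary
vertices and `⟦N⟧`, i.e. every party labels exactly one vertex. -/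
def IsSimple {N : ℕ} (G : GraphModel N) : Prop :=
  ∀ ℓ : Party N, ∃! v : G.V, G.label v = some ℓ

/-- The underlying simple graph of a graph model: an edge wherever the weight is
strictly positive. -/
def GraphModel.toSimpleGraph {N : ℕ} (G : GraphModel N) : SimpleGraph G.V where
  Adj u v := 0 < G.w u v
  symm := by
    constructor
    intro u v h
    show 0 < G.w v u
    rw [G.w_symm v u]
    exact h
  loopless := by
    constructor
    intro v h
    change 0 < G.w v v at h
    rw [G.w_loopless v] at h
    exact lt_irrefl 0 h

section Aux

variable {N : ℕ} (G : GraphModel N)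

/-- Total weight of (ordered) pairs between two vertex sets. -/
def eSum (X Y : Finset G.V) : ℝ := ∑ u ∈ X, ∑ v ∈ Y, G.w u v

lemma eSum_nonneg (X Y : Finset G.V) : 0 ≤ eSum G X Y :=
  Finset.sum_nonneg fun u _ => Finset.sum_nonneg fun v _ => G.w_nonneg u v

lemma eSum_comm (X Y : Finset G.V) : eSum G X Y = eSum G Y X := by
  rw [eSum, Finset.sum_comm]
  exact Finset.sum_congr rfl fun v _ => Finset.sum_congr rfl fun u _ => G.w_symm u v

lemma eSum_union_left {X X' : Finset G.V} (Y : Finset G.V) (h : Disjoint X X') :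
    eSum G (X ∪ X') Y = eSum G X Y + eSum G X' Y :=
  Finset.sum_union h

lemma eSum_union_right (X : Finset G.V) {Y Y' : Finset G.V} (h : Disjoint Y Y') :
    eSum G X (Y ∪ Y') = eSum G X Y + eSum G X Y' := by
  unfold eSum
  rw [← Finset.sum_add_distrib]
  exact Finset.sum_congr rfl fun u _ => Finset.sum_union h

lemma eSum_split {X X' Y Y' : Finset G.V} (dX : Disjoint X X') (dY : Disjoint Y Y') :
    eSum G (X ∪ X') (Y ∪ Y') =
      eSum G X Y + eSum G X Y' + eSum G X' Y + eSum G X' Y' := by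
  rw [eSum_union_left G _ dX, eSum_union_right G _ dY, eSum_union_right G _ dY]
  ring

lemma eSum_eq_zero_iff {X Y : Finset G.V} :
    eSum G X Y = 0 ↔ ∀ u ∈ X, ∀ v ∈ Y, G.w u v = 0 := by
  unfold eSum
  rw [Finset.sum_eq_zero_iff_of_nonneg
    (fun u _ => Finset.sum_nonneg fun v _ => G.w_nonneg u v)]
  exact forall₂_congr fun u _ =>
    Finset.sum_eq_zero_iff_of_nonneg (fun v _ => G.w_nonneg u v)

lemma cutCost_eq_eSum (C : Finset G.V) : cutCost G C = eSum G C Cᶜ := rfl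

lemma cutCost_nonneg (C : Finset G.V) : 0 ≤ cutCost G C :=
  eSum_nonneg G C Cᶜ

/-- The two key identities for the cut cost: submodularity and posimodularity,
with exact error terms. -/
lemma cut_identities (A B : Finset G.V) :
    cutCost G A + cutCost G B
        = cutCost G (A ∪ B) + cutCost G (A ∩ B) + 2 * eSum G (A \ B) (B \ A) ∧
      cutCost G A + cutCost G B
        = cutCost G (A \ B) + cutCost G (B \ A) + 2 * eSum G (A ∩ B) (A ∪ B)ᶜ := by
  classical
  have dPQ : Disjoint (A ∩ B) (A \ B) := by
    rw [Finset.disjoint_left]; intro v hv; simp at hv ⊢; tauto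
  have dPR : Disjoint (A ∩ B) (B \ A) := by
    rw [Finset.disjoint_left]; intro v hv; simp at hv ⊢; tauto
  have dQR : Disjoint (A \ B) (B \ A) := by
    rw [Finset.disjoint_left]; intro v hv; simp at hv ⊢; tauto
  have dPS : Disjoint (A ∩ B) (A ∪ B)ᶜ := by
    rw [Finset.disjoint_left]; intro v hv; simp at hv ⊢; tauto
  have dQS : Disjoint (A \ B) (A ∪ B)ᶜ := by
    rw [Finset.disjoint_left]; intro v hv; simp at hv ⊢; tauto
  have dRS : Disjoint (B \ A) (A ∪ B)ᶜ := by
    rw [Finset.disjoint_left]; intro v hv; simp at hv ⊢; tauto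
  have hA : cutCost G A = eSum G (A ∩ B) (B \ A) + eSum G (A ∩ B) (A ∪ B)ᶜ
      + eSum G (A \ B) (B \ A) + eSum G (A \ B) (A ∪ B)ᶜ := by
    have h1 : (A ∩ B) ∪ (A \ B) = A := by ext v; simp; tauto
    have h2 : (B \ A) ∪ (A ∪ B)ᶜ = Aᶜ := by ext v; simp; tauto
    have := eSum_split G dPQ dRS
    rw [h1, h2] at this
    rw [cutCost_eq_eSum, this]; try ring
  have hB : cutCost G B = eSum G (A ∩ B) (A \ B) + eSum G (A ∩ B) (A ∪ B)ᶜ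
      + eSum G (B \ A) (A \ B) + eSum G (B \ A) (A ∪ B)ᶜ := by
    have h1 : (A ∩ B) ∪ (B \ A) = B := by ext v; simp; tauto
    have h2 : (A \ B) ∪ (A ∪ B)ᶜ = Bᶜ := by ext v; simp; tauto
    have := eSum_split G dPR dQS
    rw [h1, h2] at this
    rw [cutCost_eq_eSum, this]; try ring
  have hU : cutCost G (A ∪ B) = eSum G (A ∩ B) (A ∪ B)ᶜ
      + eSum G (A \ B) (A ∪ B)ᶜ + eSum G (B \ A) (A ∪ B)ᶜ := by
    have h1 : (A ∩ B) ∪ ((A \ B) ∪ (B \ A)) = A ∪ B := by ext v; simp; tauto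
    have d : Disjoint (A ∩ B) ((A \ B) ∪ (B \ A)) := by
      rw [Finset.disjoint_union_right]; exact ⟨dPQ, dPR⟩
    have := eSum_union_left G (A ∪ B)ᶜ d
    rw [h1, eSum_union_left G (A ∪ B)ᶜ dQR] at this
    rw [cutCost_eq_eSum, this]; try ring
  have hI : cutCost G (A ∩ B) = eSum G (A ∩ B) (A \ B)
      + eSum G (A ∩ B) (B \ A) + eSum G (A ∩ B) (A ∪ B)ᶜ := by
    have h1 : (A \ B) ∪ ((B \ A) ∪ (A ∪ B)ᶜ) = (A ∩ B)ᶜ := by ext v; simp; tauto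
    have d : Disjoint (A \ B) ((B \ A) ∪ (A ∪ B)ᶜ) := by
      rw [Finset.disjoint_union_right]; exact ⟨dQR, dQS⟩
    have := eSum_union_right G (A ∩ B) d
    rw [h1, eSum_union_right G (A ∩ B) dRS] at this
    rw [cutCost_eq_eSum, this]; try ring
  have hdQ : cutCost G (A \ B) = eSum G (A \ B) (A ∩ B)
      + eSum G (A \ B) (B \ A) + eSum G (A \ B) (A ∪ B)ᶜ := by
    have h1 : (A ∩ B) ∪ ((B \ A) ∪ (A ∪ B)ᶜ) = (A \ B)ᶜ := by ext v; simp; tauto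
    have d : Disjoint (A ∩ B) ((B \ A) ∪ (A ∪ B)ᶜ) := by
      rw [Finset.disjoint_union_right]; exact ⟨dPR, dPS⟩
    have := eSum_union_right G (A \ B) d
    rw [h1, eSum_union_right G (A \ B) dRS] at this
    rw [cutCost_eq_eSum, this]; try ring
  have hdR : cutCost G (B \ A) = eSum G (B \ A) (A ∩ B)
      + eSum G (B \ A) (A \ B) + eSum G (B \ A) (A ∪ B)ᶜ := by
    have h1 : (A ∩ B) ∪ ((A \ B) ∪ (A ∪ B)ᶜ) = (B \ A)ᶜ := by ext v; simp; tauto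
    have d : Disjoint (A ∩ B) ((A \ B) ∪ (A ∪ B)ᶜ) := by
      rw [Finset.disjoint_union_right]; exact ⟨dPQ, dPS⟩
    have := eSum_union_right G (B \ A) d
    rw [h1, eSum_union_right G (B \ A) dQS] at this
    rw [cutCost_eq_eSum, this]; try ring
  have c1 : eSum G (A \ B) (B \ A) = eSum G (B \ A) (A \ B) := eSum_comm G _ _
  have c2 : eSum G (A ∩ B) (A \ B) = eSum G (A \ B) (A ∩ B) := eSum_comm G _ _
  have c3 : eSum G (A ∩ B) (B \ A) = eSum G (B \ A) (A ∩ B) := eSum_comm G _ _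
  constructor <;> linarith

lemma gEntropy_eq_of_minCut {Y : PSet N} {C : Finset G.V} (hC : IsMinCut G Y C) :
    gEntropy G Y = cutCost G C := by
  apply le_antisymm
  · exact csInf_le ⟨cutCost G C, by rintro x ⟨D, hD, rfl⟩; exact hC.2 D hD⟩
      ⟨C, hC.1, rfl⟩
  · exact le_csInf ⟨cutCost G C, C, hC.1, rfl⟩
      (by rintro x ⟨D, hD, rfl⟩; exact hC.2 D hD)

lemma isCut_union {Y Z : PSet N} {C D : Finset G.V}
    (h1 : IsCut G Y C) (h2 : IsCut G Z D) : IsCut G (Y ∪ Z) (C ∪ D) := by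
  intro v ℓ hv
  rw [Finset.mem_union, Finset.mem_union, h1 v ℓ hv, h2 v ℓ hv]

lemma isCut_sdiff {Y Z : PSet N} {C D : Finset G.V} (hYZ : Disjoint Y Z)
    (h1 : IsCut G Y C) (h2 : IsCut G Z D) : IsCut G Y (C \ D) := by
  intro v ℓ hv
  rw [Finset.mem_sdiff, h1 v ℓ hv, h2 v ℓ hv]
  exact ⟨fun h => h.1, fun h => ⟨h, Finset.disjoint_left.mp hYZ h⟩⟩

lemma isCut_inter_of_subset {Y T : PSet N} {C D : Finset G.V} (hYT : Y ⊆ T)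
    (h1 : IsCut G Y C) (h2 : IsCut G T D) : IsCut G Y (C ∩ D) := by
  intro v ℓ hv
  rw [Finset.mem_inter, h1 v ℓ hv, h2 v ℓ hv]
  exact ⟨fun h => h.1, fun h => ⟨h, hYT h⟩⟩

lemma isCut_union_of_subset {Y T : PSet N} {C D : Finset G.V} (hYT : Y ⊆ T)
    (h1 : IsCut G Y C) (h2 : IsCut G T D) : IsCut G T (C ∪ D) := by
  intro v ℓ hv
  rw [Finset.mem_union, h1 v ℓ hv, h2 v ℓ hv]
  exact ⟨fun h => h.elim (fun hy => hYT hy) id, fun h => Or.inr h⟩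

/-- A minimal min-cut for `Y` is contained in any min-cut `CT` (for a possibly
different subsystem `T`) provided the intersection is a `Y`-cut and the union
is a `T`-cut. -/
lemma minimal_subset {Y T : PSet N} {CW CT : Finset G.V}
    (hW : IsMinimalMinCut G Y CW) (hT : IsMinCut G T CT)
    (hI : IsCut G Y (CW ∩ CT)) (hU : IsCut G T (CW ∪ CT)) : CW ⊆ CT := by
  have key := (cut_identities G CW CT).1
  have h1 : cutCost G CT ≤ cutCost G (CW ∪ CT) := hT.2 _ hU
  have h2 : cutCost G CW ≤ cutCost G (CW ∩ CT) := hW.1.2 _ hI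
  have h3 : 0 ≤ eSum G (CW \ CT) (CT \ CW) := eSum_nonneg G _ _
  have h4 : cutCost G (CW ∩ CT) ≤ cutCost G CW := by linarith
  have hmin : IsMinCut G Y (CW ∩ CT) :=
    ⟨hI, fun C' hC' => le_trans h4 (hW.1.2 C' hC')⟩
  have := hW.2 _ hmin Finset.inter_subset_left
  exact Finset.inter_eq_left.mp this

end Aux

/-- For disjoint nonempty subsystems `Y, Z`: `I(Y:Z) = 0` iff
`mC_{Y∪Z} = mC_Y ∪ mC_Z`, `mC_Y ∩ mC_Z = ∅`, and no edge of `G` has one endpoint in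
`mC_Y` and the other in `mC_Z` (i.e. `G_{Y∪Z} = G_Y ⊕ G_Z`). -/
theorem statement1 {N : ℕ} (hN : 2 ≤ N) (G : GraphModel N)
    (Y Z : PSet N) (hY : Y.Nonempty) (hZ : Z.Nonempty) (hYZ : Disjoint Y Z)
    (CY CZ CYZ : Finset G.V)
    (hCY : IsMinimalMinCut G Y CY) (hCZ : IsMinimalMinCut G Z CZ)
    (hCYZ : IsMinimalMinCut G (Y ∪ Z) CYZ) :
    gMI G Y Z = 0 ↔
      (CYZ = CY ∪ CZ ∧ CY ∩ CZ = ∅ ∧ ∀ u ∈ CY, ∀ v ∈ CZ, G.w u v = 0) := by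
  classical
  have hSY : gEntropy G Y = cutCost G CY := gEntropy_eq_of_minCut G hCY.1
  have hSZ : gEntropy G Z = cutCost G CZ := gEntropy_eq_of_minCut G hCZ.1
  have hSYZ : gEntropy G (Y ∪ Z) = cutCost G CYZ := gEntropy_eq_of_minCut G hCYZ.1
  have hMI : gMI G Y Z = cutCost G CY + cutCost G CZ - cutCost G CYZ := by
    rw [gMI, hSY, hSZ, hSYZ]
  constructor
  · intro h0
    rw [hMI, sub_eq_zero] at h0
    -- `h0 : cutCost G CY + cutCost G CZ = cutCost G CYZ`
    have hcutU : IsCut G (Y ∪ Z) (CY ∪ CZ) := isCut_union G hCY.1.1 hCZ.1.1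
    have hcutYd : IsCut G Y (CY \ CZ) := isCut_sdiff G hYZ hCY.1.1 hCZ.1.1
    have hcutZd : IsCut G Z (CZ \ CY) :=
      isCut_sdiff G hYZ.symm hCZ.1.1 hCY.1.1
    have key1 := (cut_identities G CY CZ).1
    have key2 := (cut_identities G CY CZ).2
    have hU : cutCost G CYZ ≤ cutCost G (CY ∪ CZ) := hCYZ.1.2 _ hcutU
    have hYd : cutCost G CY ≤ cutCost G (CY \ CZ) := hCY.1.2 _ hcutYd
    have hZd : cutCost G CZ ≤ cutCost G (CZ \ CY) := hCZ.1.2 _ hcutZd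
    have hIn : 0 ≤ cutCost G (CY ∩ CZ) := cutCost_nonneg G _
    have hE1 : 0 ≤ eSum G (CY \ CZ) (CZ \ CY) := eSum_nonneg G _ _
    have hE2 : 0 ≤ eSum G (CY ∩ CZ) (CY ∪ CZ)ᶜ := eSum_nonneg G _ _
    -- deduce all the equalities
    have hYdEqCost : cutCost G (CY \ CZ) = cutCost G CY := by linarith
    have hCrossZero : eSum G (CY \ CZ) (CZ \ CY) = 0 := by linarith
    have hUEq : cutCost G (CY ∪ CZ) = cutCost G CYZ := by linarith
    -- `CY \ CZ` is a min-cut for `Y` contained in `CY`, so equals `CY`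
    have hminYd : IsMinCut G Y (CY \ CZ) :=
      ⟨hcutYd, fun C' hC' => hYdEqCost ▸ hCY.1.2 C' hC'⟩
    have hYdEq : CY \ CZ = CY := hCY.2 _ hminYd (Finset.sdiff_subset)
    have hdisjC : Disjoint CY CZ := Finset.sdiff_eq_self_iff_disjoint.mp hYdEq
    have hinter : CY ∩ CZ = ∅ := Finset.disjoint_iff_inter_eq_empty.mp hdisjC
    have hZdEq : CZ \ CY = CZ :=
      Finset.sdiff_eq_self_iff_disjoint.mpr hdisjC.symm
    -- no edges between `CY` and `CZ`
    have hEdges : ∀ u ∈ CY, ∀ v ∈ CZ, G.w u v = 0 := by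
      rw [hYdEq, hZdEq] at hCrossZero
      exact (eSum_eq_zero_iff G).mp hCrossZero
    -- `CY ∪ CZ` is a min-cut for `Y ∪ Z`
    have hminU : IsMinCut G (Y ∪ Z) (CY ∪ CZ) :=
      ⟨hcutU, fun C' hC' => hUEq ▸ hCYZ.1.2 C' hC'⟩
    -- nesting: `CY ⊆ CYZ`, `CZ ⊆ CYZ`
    have hYsub : CY ⊆ CYZ :=
      minimal_subset G hCY hCYZ.1
        (isCut_inter_of_subset G Finset.subset_union_left hCY.1.1 hCYZ.1.1)
        (isCut_union_of_subset G Finset.subset_union_left hCY.1.1 hCYZ.1.1)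
    have hZsub : CZ ⊆ CYZ :=
      minimal_subset G hCZ hCYZ.1
        (isCut_inter_of_subset G Finset.subset_union_right hCZ.1.1 hCYZ.1.1)
        (isCut_union_of_subset G Finset.subset_union_right hCZ.1.1 hCYZ.1.1)
    have hsub : CY ∪ CZ ⊆ CYZ := Finset.union_subset hYsub hZsub
    exact ⟨(hCYZ.2 _ hminU hsub).symm, hinter, hEdges⟩
  · rintro ⟨h1, h2, h3⟩
    have hdisjC : Disjoint CY CZ := Finset.disjoint_iff_inter_eq_empty.mpr h2
    have key1 := (cut_identities G CY CZ).1
    have hYdEq : CY \ CZ = CY := Finset.sdiff_eq_self_iff_disjoint.mpr hdisjC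
    have hZdEq : CZ \ CY = CZ := Finset.sdiff_eq_self_iff_disjoint.mpr hdisjC.symm
    have hCross : eSum G (CY \ CZ) (CZ \ CY) = 0 := by
      rw [hYdEq, hZdEq]
      exact (eSum_eq_zero_iff G).mpr h3
    have hInt : cutCost G (CY ∩ CZ) = 0 := by
      rw [h2]
      simp [cutCost]
    rw [hCross, hInt, ← h1] at key1
    rw [hMI]
    linarith

end HEC
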